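/- arXiv:math/0408124 — 2 statements merged into one kernel-verified Lean document; each statement's English description precedes it below -/
import Mathlib

section
/- Let R be a commutative ring of prime characteristic p and f ∈ R. Every element of the localization R_f can be written as f^{k(p-1)}·a · (f^{-1})^{p^e} for suitable a ∈ R and natural numbers k, e; more precisely, R_f is generated as a module over the twisted polynomial ring R[F] (with relation F·r = r^p·F) by the single element f^{-1}, where F acts on R_f by x ↦ x^p. -/
lemma aux_mk_one_pow (R : Type*) [CommRing R] (f : R) (m : ℕ) :
    (Localization.mk 1 ⟨f, Submonoid.mem_powers f⟩ : Localization.Away f) ^ m =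
      Localization.mk 1 ⟨f ^ m, (⟨m, rfl⟩ : f ^ m ∈ Submonoid.powers f)⟩ := by
  induction m with
  | zero => rw [pow_zero, ← Localization.mk_one]; congr 1; ext; simp
  | succ k ih =>
      rw [pow_succ, ih, Localization.mk_mul]
      congr 1
      · simp
      · ext; simp [pow_succ]

lemma aux_mk_eq (R : Type*) [CommRing R] (f a : R) (n m : ℕ) (h : n ≤ m) :
    Localization.mk a ⟨f ^ n, (⟨n, rfl⟩ : f ^ n ∈ Submonoid.powers f)⟩ =
      algebraMap R (Localization.Away f) (a * f ^ (m - n)) *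
        (Localization.mk 1 ⟨f, Submonoid.mem_powers f⟩) ^ m := by
  rw [aux_mk_one_pow, ← Localization.mk_one_eq_algebraMap, Localization.mk_mul, one_mul, mul_one,
    Localization.mk_eq_mk_iff]
  apply Localization.r_of_eq
  simp only [Submonoid.coe_mul, OneMemClass.coe_one, one_mul]
  calc f ^ m * a = f ^ (n + (m - n)) * a := by rw [Nat.add_sub_cancel' h]
    _ = f ^ n * (a * f ^ (m - n)) := by rw [pow_add]; ring

/-- Let `R` be a commutative ring of prime characteristic `p` and `f ∈ R`. Every element of
`R_f` can be written as `f ^ (k * (p - 1)) * a * (f⁻¹) ^ (p ^ e)`; more precisely, `R_f` is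
generated by `f⁻¹` as a module over the twisted polynomial ring `R[F]`, i.e. every
`R`-submodule of `R_f` containing `f⁻¹` and stable under `x ↦ x ^ p` is all of `R_f`. -/
theorem localization_generated_by_inverse_RF (R : Type*) [CommRing R] (p : ℕ)
    [Fact p.Prime] [CharP R p] (f : R) :
    (∀ y : Localization.Away f, ∃ (a : R) (k e : ℕ),
        y = algebraMap R (Localization.Away f) (f ^ (k * (p - 1)) * a) *
          (Localization.mk 1 ⟨f, Submonoid.mem_powers f⟩) ^ p ^ e) ∧
    (∀ N : Submodule R (Localization.Away f),
      (∀ x ∈ N, x ^ p ∈ N) →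
      Localization.mk 1 ⟨f, Submonoid.mem_powers f⟩ ∈ N →
      N = ⊤) := by
  have hp2 : 2 ≤ p := (Fact.out : p.Prime).two_le
  have hsurj : ∀ y : Localization.Away f, ∃ (a : R) (n : ℕ),
      y = Localization.mk a ⟨f ^ n, (⟨n, rfl⟩ : f ^ n ∈ Submonoid.powers f)⟩ := by
    intro y
    induction y using Localization.induction_on with
    | H x =>
      obtain ⟨a, s⟩ := x
      obtain ⟨n, hn⟩ := s.2
      exact ⟨a, n, by congr 1; ext; exact hn.symm⟩
  constructor
  · intro y
    obtain ⟨a, n, rfl⟩ := hsurj y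
    have hle : n ≤ p ^ n := (Nat.lt_pow_self (n := n) (show 1 < p by omega)).le
    refine ⟨a * f ^ (p ^ n - n), 0, n, ?_⟩
    rw [aux_mk_eq R f a n (p ^ n) hle]
    ring_nf
  · intro N hF hmem
    have hpow : ∀ e : ℕ,
        (Localization.mk 1 ⟨f, Submonoid.mem_powers f⟩ : Localization.Away f) ^ p ^ e ∈ N := by
      intro e
      induction e with
      | zero => simpa using hmem
      | succ k ih =>
          have := hF _ ih
          rwa [← pow_mul, ← pow_succ] at this
    rw [Submodule.eq_top_iff']
    intro y
    obtain ⟨a, n, rfl⟩ := hsurj y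
    have hle : n ≤ p ^ n := (Nat.lt_pow_self (n := n) (show 1 < p by omega)).le
    rw [aux_mk_eq R f a n (p ^ n) hle, ← Algebra.smul_def]
    exact N.smul_mem _ (hpow n)
end

section
/- Let R be a commutative ring and P a finitely generated projective faithful R-module (e.g., finite locally free of positive rank). Then the evaluation map Ψ : Hom_R(P, R) ⊗_{End_R(P)} P → R, sending φ ⊗ a to φ(a), is an isomorphism of R-modules. -/
open TensorProduct

section

variable (R : Type) [CommRing R] (P : Type) [AddCommGroup P] [Module R P]

/-- The tensor product `Hom_R(P,R) ⊗_{End_R(P)} P`, realized as the quotient of the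
tensor product of abelian groups `Hom_R(P,R) ⊗_ℤ P` by the balancing relations
`(φ ∘ g) ⊗ a = φ ⊗ g a` for `g ∈ End_R(P)`. -/
noncomputable def balancedRelations : Submodule R ((P →ₗ[R] R) ⊗[ℤ] P) :=
  Submodule.span R
    {x | ∃ (φ : P →ₗ[R] R) (g : P →ₗ[R] P) (a : P),
      x = (φ.comp g) ⊗ₜ[ℤ] a - φ ⊗ₜ[ℤ] (g a)}

/-- `Hom_R(P,R) ⊗_{End_R(P)} P`. -/
noncomputable def homTensorOverEnd : Type :=
  ((P →ₗ[R] R) ⊗[ℤ] P) ⧸ balancedRelations R P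

noncomputable instance : AddCommGroup (homTensorOverEnd R P) :=
  inferInstanceAs (AddCommGroup (((P →ₗ[R] R) ⊗[ℤ] P) ⧸ balancedRelations R P))

noncomputable instance : Module R (homTensorOverEnd R P) :=
  inferInstanceAs (Module R (((P →ₗ[R] R) ⊗[ℤ] P) ⧸ balancedRelations R P))

/-- The class of `φ ⊗ a` in `Hom_R(P,R) ⊗_{End_R(P)} P`. -/
noncomputable def homTensorOverEnd.mk (φ : P →ₗ[R] R) (a : P) : homTensorOverEnd R P :=
  Submodule.Quotient.mk (φ ⊗ₜ[ℤ] a)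

end

section aux

variable (R : Type) [CommRing R] (P : Type) [AddCommGroup P] [Module R P]

/-- Evaluation on the ℤ-tensor product. -/
noncomputable def evTensor : ((P →ₗ[R] R) ⊗[ℤ] P) →ₗ[R] R :=
  TensorProduct.AlgebraTensorModule.lift
    { toFun := fun φ => φ.restrictScalars ℤ
      map_add' := fun _ _ => rfl
      map_smul' := fun _ _ => rfl }

lemma evTensor_tmul (φ : P →ₗ[R] R) (a : P) : evTensor R P (φ ⊗ₜ[ℤ] a) = φ a := rfl

lemma evTensor_vanishes : balancedRelations R P ≤ LinearMap.ker (evTensor R P) := by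
  rw [balancedRelations, Submodule.span_le]
  rintro x ⟨φ, g, a, rfl⟩
  simp only [SetLike.mem_coe, LinearMap.mem_ker, map_sub, evTensor_tmul, LinearMap.comp_apply,
    sub_self]

/-- The evaluation map on the quotient. -/
noncomputable def PsiLin : homTensorOverEnd R P →ₗ[R] R :=
  Submodule.liftQ (balancedRelations R P) (evTensor R P) (evTensor_vanishes R P)

lemma PsiLin_mk (φ : P →ₗ[R] R) (a : P) :
    PsiLin R P (homTensorOverEnd.mk R P φ a) = φ a := rfl

lemma mk_rel (φ : P →ₗ[R] R) (g : P →ₗ[R] P) (a : P) :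
    homTensorOverEnd.mk R P (φ.comp g) a = homTensorOverEnd.mk R P φ (g a) := by
  unfold homTensorOverEnd.mk
  refine (Submodule.Quotient.eq (balancedRelations R P)).mpr ?_
  exact Submodule.subset_span ⟨φ, g, a, rfl⟩

lemma smul_mk (r : R) (φ : P →ₗ[R] R) (a : P) :
    r • homTensorOverEnd.mk R P φ a = homTensorOverEnd.mk R P (r • φ) a := by
  unfold homTensorOverEnd.mk
  show r • (Submodule.Quotient.mk (φ ⊗ₜ[ℤ] a) : ((P →ₗ[R] R) ⊗[ℤ] P) ⧸ balancedRelations R P) = _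
  rw [← Submodule.Quotient.mk_smul, TensorProduct.smul_tmul']

lemma key_swap (φ ψ : P →ₗ[R] R) (a b : P) :
    φ a • homTensorOverEnd.mk R P ψ b = ψ b • homTensorOverEnd.mk R P φ a := by
  have h1 : (φ a • ψ) = ψ.comp (φ a • LinearMap.id) := by ext x; simp
  have h2 : ψ.comp (LinearMap.smulRight φ b) = ψ b • φ := by
    ext x; simp [mul_comm]
  calc φ a • homTensorOverEnd.mk R P ψ b
      = homTensorOverEnd.mk R P (ψ.comp (φ a • LinearMap.id)) b := by rw [smul_mk, h1]
    _ = homTensorOverEnd.mk R P ψ ((φ a • LinearMap.id : P →ₗ[R] P) b) := mk_rel R P _ _ _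
    _ = homTensorOverEnd.mk R P ψ ((LinearMap.smulRight φ b) a) := rfl
    _ = homTensorOverEnd.mk R P (ψ.comp (LinearMap.smulRight φ b)) a := (mk_rel R P _ _ _).symm
    _ = homTensorOverEnd.mk R P (ψ b • φ) a := by rw [h2]
    _ = ψ b • homTensorOverEnd.mk R P φ a := (smul_mk R P _ _ _).symm

lemma one_mem_trace [Module.Finite R P] [Module.Projective R P] [FaithfulSMul R P] :
    (1 : R) ∈ Ideal.span {r : R | ∃ (φ : P →ₗ[R] R) (x : P), φ x = r} := by
  obtain ⟨n, f, g, hsurj, hinj, hfg⟩ := Module.Finite.exists_comp_eq_id_of_projective R P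
  set I := Ideal.span {r : R | ∃ (φ : P →ₗ[R] R) (x : P), φ x = r} with hI
  have hrep : ∀ p : P, p = ∑ i, g p i • f (fun j => if i = j then (1 : R) else 0) := by
    intro p
    have h0 : f (g p) = p := by rw [← LinearMap.comp_apply, hfg, LinearMap.id_apply]
    have h1 : g p = ∑ i, g p i • fun j => if i = j then (1 : R) else 0 := pi_eq_sum_univ (g p)
    calc p = f (g p) := h0.symm
      _ = f (∑ i, g p i • fun j => if i = j then (1 : R) else 0) := by rw [← h1]
      _ = ∑ i, g p i • f (fun j => if i = j then (1 : R) else 0) := by rw [map_sum]; simp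
  have hle : (⊤ : Submodule R P) ≤ I • ⊤ := by
    intro p _
    rw [hrep p]
    exact Submodule.sum_mem _ fun i _ => Submodule.smul_mem_smul
      (Ideal.subset_span ⟨(LinearMap.proj i).comp g, p, rfl⟩) trivial
  obtain ⟨r, hr1, hr0⟩ :=
    Submodule.exists_sub_one_mem_and_smul_eq_zero_of_fg_of_le_smul I ⊤ Module.Finite.fg_top hle
  have hr : r = 0 := by
    refine eq_of_smul_eq_smul (M := R) (α := P) fun p => ?_
    rw [zero_smul]
    exact hr0 p trivial
  rw [hr, zero_sub] at hr1
  simpa using I.neg_mem hr1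

end aux

/-- For a finitely generated projective faithful module `P` over a commutative ring `R`,
the evaluation map `Ψ : Hom_R(P, R) ⊗_{End_R(P)} P → R`, `φ ⊗ a ↦ φ a`, is an isomorphism
of `R`-modules. -/
theorem homTensorOverEnd_equiv (R : Type) [CommRing R] (P : Type) [AddCommGroup P]
    [Module R P] [Module.Finite R P] [Module.Projective R P] [FaithfulSMul R P] :
    ∃ Ψ : homTensorOverEnd R P ≃ₗ[R] R,
      ∀ (φ : P →ₗ[R] R) (a : P), Ψ (homTensorOverEnd.mk R P φ a) = φ a := by
  classical
  set S : Set R := {r : R | ∃ (φ : P →ₗ[R] R) (x : P), φ x = r} with hS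
  have main : ∀ r ∈ Ideal.span S, ∃ t : homTensorOverEnd R P,
      PsiLin R P t = r ∧
      ∀ (ψ : P →ₗ[R] R) (b : P), r • homTensorOverEnd.mk R P ψ b = ψ b • t := by
    intro r hr
    induction hr using Submodule.span_induction with
    | mem x hx =>
        obtain ⟨φ, a, rfl⟩ := hx
        exact ⟨homTensorOverEnd.mk R P φ a, PsiLin_mk R P φ a,
          fun ψ b => key_swap R P φ ψ a b⟩
    | zero => exact ⟨0, map_zero _, by simp⟩
    | add x y hx hy ihx ihy =>
        obtain ⟨t1, e1, k1⟩ := ihx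
        obtain ⟨t2, e2, k2⟩ := ihy
        exact ⟨t1 + t2, by rw [map_add, e1, e2], fun ψ b => by
          rw [add_smul, k1, k2, smul_add]⟩
    | smul c x hx ih =>
        obtain ⟨t, e, k⟩ := ih
        refine ⟨c • t, by rw [map_smul, e], fun ψ b => ?_⟩
        rw [smul_eq_mul, mul_smul, k, smul_comm]
  obtain ⟨t₀, ht₀, hk⟩ := main 1 (one_mem_trace R P)
  have hmk : ∀ (ψ : P →ₗ[R] R) (b : P), homTensorOverEnd.mk R P ψ b = ψ b • t₀ := by
    intro ψ b
    rw [← hk ψ b, one_smul]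
  have hleft : ∀ x : homTensorOverEnd R P, PsiLin R P x • t₀ = x := by
    intro x
    obtain ⟨y, rfl⟩ :=
      (Submodule.Quotient.mk_surjective (balancedRelations R P)) x
    induction y using TensorProduct.induction_on with
    | zero => show PsiLin R P 0 • t₀ = 0; rw [map_zero, zero_smul]
    | tmul φ a => rw [show (Submodule.Quotient.mk (φ ⊗ₜ[ℤ] a) : homTensorOverEnd R P)
          = homTensorOverEnd.mk R P φ a from rfl, PsiLin_mk, ← hmk]
    | add x y ihx ihy =>
        have e := (map_add (PsiLin R P) (Submodule.Quotient.mk x) (Submodule.Quotient.mk y))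
        rw [Submodule.Quotient.mk_add]
        exact (congrArg (· • t₀) e).trans ((add_smul _ _ t₀).trans (congrArg₂ (· + ·) ihx ihy))
  refine ⟨{ PsiLin R P with
    invFun := fun r => r • t₀
    left_inv := fun x => hleft x
    right_inv := fun r => by
      show PsiLin R P (r • t₀) = r
      rw [map_smul, ht₀, smul_eq_mul, mul_one] },
    fun φ a => PsiLin_mk R P φ a⟩
end
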